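/- For all p, q ∈ 𝐆 and all α, β, γ ∈ ℕ there exists N ∈ ℕ such that for every j ≥ N there exist k₁ ∈ 𝐊[α] and k₂ ∈ 𝐊[γ] with p·Θ_j[β]·q = k₁·(p·Θ_N[β]·q)·k₂; that is, the sequence of double cosets 𝐊[α]·(p·Θ_j[β]·q)·𝐊[γ] is eventually constant in j. -/

import Mathlib

/-- Finite-support condition for a permutation. -/
def FinSupp (g : Equiv.Perm ℕ) : Prop := {x | g x ≠ x}.Finite

lemma finSupp_one : FinSupp 1 := by simp [FinSupp]

lemma finSupp_mul {a b : Equiv.Perm ℕ} (ha : FinSupp a) (hb : FinSupp b) :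
    FinSupp (a * b) := by
  refine Set.Finite.subset (ha.union hb) fun x hx => ?_
  simp only [Set.mem_setOf_eq, Equiv.Perm.mul_apply] at hx
  simp only [Set.mem_union, Set.mem_setOf_eq]
  by_cases h : b x = x
  · exact Or.inl (by simpa [h] using hx)
  · exact Or.inr h

lemma finSupp_inv {a : Equiv.Perm ℕ} (ha : FinSupp a) : FinSupp a⁻¹ := by
  refine Set.Finite.subset ha fun x hx => ?_
  simp only [Set.mem_setOf_eq] at hx ⊢
  intro h
  apply hx
  nth_rewrite 1 [← h]
  simp

lemma finSupp_conj {a : Equiv.Perm ℕ} (σ : Equiv.Perm ℕ) (ha : FinSupp a) :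
    FinSupp (σ * a * σ⁻¹) := by
  refine Set.Finite.subset (ha.image σ) fun x hx => ?_
  simp only [Set.mem_setOf_eq, Equiv.Perm.mul_apply] at hx
  refine ⟨σ⁻¹ x, ?_, by simp⟩
  simp only [Set.mem_setOf_eq]
  intro h
  apply hx
  rw [h]
  simp

/-- The bisymmetric group `𝐆`: pairs of permutations of `ℕ` whose ratio has finite
support. -/
def biSymm : Subgroup (Equiv.Perm ℕ × Equiv.Perm ℕ) where
  carrier := {g | FinSupp (g.1 * g.2⁻¹)}
  one_mem' := by simpa using finSupp_one
  mul_mem' := by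
    intro a b ha hb
    simp only [Set.mem_setOf_eq, Prod.fst_mul, Prod.snd_mul] at *
    have key : a.1 * b.1 * (a.2 * b.2)⁻¹ = (a.1 * (b.1 * b.2⁻¹) * a.1⁻¹) * (a.1 * a.2⁻¹) := by
      group
    rw [key]
    exact finSupp_mul (finSupp_conj _ hb) ha
  inv_mem' := by
    intro a ha
    simp only [Set.mem_setOf_eq, Prod.fst_inv, Prod.snd_inv] at *
    have key : a.1⁻¹ * (a.2⁻¹)⁻¹ = a.1⁻¹ * ((a.1 * a.2⁻¹)⁻¹) * a.1 := by group
    rw [key]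
    have := finSupp_conj a.1⁻¹ (finSupp_inv ha)
    simpa using this

/-- Membership in the subgroup `𝐊[α] ⊆ 𝐆`: diagonal pairs `(r, r)` with `r` fixing
every point `x < α`. -/
def InKbi (α : ℕ) (k : ↥biSymm) : Prop :=
  (k : Equiv.Perm ℕ × Equiv.Perm ℕ).1 = (k : Equiv.Perm ℕ × Equiv.Perm ℕ).2 ∧
    ∀ x < α, (k : Equiv.Perm ℕ × Equiv.Perm ℕ).1 x = x

/-- The permutation exchanging the blocks `[β, β+j)` and `[β+j, β+2j)`. -/
def thetaFun (β j : ℕ) (x : ℕ) : ℕ :=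
  if β ≤ x ∧ x < β + j then x + j
  else if β + j ≤ x ∧ x < β + 2 * j then x - j
  else x

lemma thetaFun_involutive (β j : ℕ) : Function.Involutive (thetaFun β j) := by
  intro x
  unfold thetaFun
  split_ifs <;> omega

/-- `θ_j[β]` as a permutation of `ℕ`. -/
def thetaPerm (β j : ℕ) : Equiv.Perm ℕ :=
  Function.Involutive.toPerm _ (thetaFun_involutive β j)

/-- `Θ_j[β] = (θ_j[β], θ_j[β])` as an element of the bisymmetric group. -/
def ThetaBi (β j : ℕ) : ↥biSymm :=
  ⟨(thetaPerm β j, thetaPerm β j), by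
    show FinSupp (thetaPerm β j * (thetaPerm β j)⁻¹)
    simpa using finSupp_one⟩

/-!
For `β ≤ N ≤ j` one has `θ_j[β] = c θ_N[β] d` with `c, d` fixing `[0, N)`. Conjugating `(c, c)`
by `p` and `(d, d)` by `q⁻¹` stays diagonal and lands in `𝐊[α]` and `𝐊[γ]` once `N` is large,
because `p₂⁻¹ p₁` and `q₂ q₁⁻¹` are finitary and so commute with every permutation fixing `[0, N)`.
-/

def rotPerm (s L K : ℕ) : Equiv.Perm ℕ where
  toFun x := if s ≤ x ∧ x < s + L then x + K else if s + L ≤ x ∧ x < s + L + K then x - L else x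
  invFun x := if s ≤ x ∧ x < s + K then x + L else if s + K ≤ x ∧ x < s + L + K then x - K else x
  left_inv x := by simp only; split_ifs <;> omega
  right_inv x := by simp only; split_ifs <;> omega

lemma rotPerm_apply (s L K x : ℕ) : rotPerm s L K x =
    if s ≤ x ∧ x < s + L then x + K else if s + L ≤ x ∧ x < s + L + K then x - L else x := rfl

lemma rotPerm_symm_apply (s L K x : ℕ) : (rotPerm s L K).symm x =
    if s ≤ x ∧ x < s + K then x + L else if s + K ≤ x ∧ x < s + L + K then x - K else x := rfl

lemma thetaPerm_apply (β j x : ℕ) : thetaPerm β j x = thetaFun β j x := rfl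

lemma thetaPerm_mul_self (β j : ℕ) : thetaPerm β j * thetaPerm β j = 1 :=
  Equiv.ext (thetaFun_involutive β j)

/-- `d := θ_N c⁻¹ θ_j` fixes `[0, N)` iff `c` carries `x + N` to `x + j` for `β ≤ x < N`;
a rotation of `[β + N, N + j)` does this. -/
lemma exists_thetaPerm_eq_mul_mul {β N j : ℕ} (hβN : β ≤ N) (hNj : N ≤ j) :
    ∃ c d : Equiv.Perm ℕ, (∀ x < N, c x = x) ∧ (∀ x < N, d x = x) ∧
      thetaPerm β j = c * thetaPerm β N * d := by
  set c := rotPerm (β + N) (N - β) (j - N)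
  refine ⟨c, thetaPerm β N * c⁻¹ * thetaPerm β j, fun x hx => ?_, fun x hx => ?_, ?_⟩
  · rw [rotPerm_apply]
    split_ifs <;> omega
  · simp only [Equiv.Perm.mul_apply, Equiv.Perm.inv_def, rotPerm_symm_apply, thetaPerm_apply, c]
    unfold thetaFun
    split_ifs <;> omega
  · calc thetaPerm β j = c * (thetaPerm β N * thetaPerm β N) * c⁻¹ * thetaPerm β j := by
          rw [thetaPerm_mul_self]; group
      _ = c * thetaPerm β N * (thetaPerm β N * c⁻¹ * thetaPerm β j) := by group

def diagBiSymm : Equiv.Perm ℕ →* biSymm :=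
  ((MonoidHom.id _).prod (MonoidHom.id _)).codRestrict biSymm fun r => by
    show FinSupp (r * r⁻¹)
    simpa using finSupp_one

lemma ThetaBi_eq_diagBiSymm (β j : ℕ) : ThetaBi β j = diagBiSymm (thetaPerm β j) := rfl

/-- `g (r, r) g⁻¹` is diagonal when `r` commutes with the finitary `g₂⁻¹ g₁`, which holds once
`r` fixes a long enough initial segment. -/
lemma exists_inKbi_conj_diagBiSymm (g : biSymm) (α : ℕ) :
    ∃ M, ∀ r : Equiv.Perm ℕ, (∀ x < M, r x = x) → InKbi α (g * diagBiSymm r * g⁻¹) := by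
  obtain ⟨⟨g₁, g₂⟩, hg⟩ := g
  have hu : FinSupp (g₂⁻¹ * g₁) := by simpa [mul_assoc] using finSupp_conj g₂⁻¹ hg
  obtain ⟨b, hb⟩ := (hu.union ((Set.finite_Iio α).image ⇑g₁⁻¹)).bddAbove
  refine ⟨b + 1, fun r hr => ⟨?_, fun x hx => ?_⟩⟩
  · have hcomm : Commute (g₂⁻¹ * g₁) r := Equiv.Perm.Disjoint.commute fun x => by
      by_cases hx : x < b + 1
      · exact Or.inr (hr x hx)
      · exact Or.inl (by_contra fun h => hx (Nat.lt_succ_of_le (hb (Or.inl h))))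
    show g₁ * r * g₁⁻¹ = g₂ * r * g₂⁻¹
    calc g₁ * r * g₁⁻¹ = g₂ * (g₂⁻¹ * g₁ * r) * g₁⁻¹ := by group
      _ = g₂ * (r * (g₂⁻¹ * g₁)) * g₁⁻¹ := by rw [hcomm.eq]
      _ = g₂ * r * g₂⁻¹ := by group
  · show g₁ (r (g₁⁻¹ x)) = x
    rw [hr _ (Nat.lt_succ_of_le (hb (Or.inr ⟨x, hx, rfl⟩)))]
    exact g₁.apply_symm_apply x

/-- **Stabilization of double cosets in the bisymmetric group** (Lemma 1.1 of §1.6): for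
`p, q ∈ 𝐆` and `α, β, γ`, the double cosets `𝐊[α]·(p·Θ_j[β]·q)·𝐊[γ]` are eventually
constant in `j`. -/
theorem biSymm_double_coset_stabilizes (p q : ↥biSymm) (α β γ : ℕ) :
    ∃ N : ℕ, ∀ j ≥ N, ∃ k₁ k₂ : ↥biSymm, InKbi α k₁ ∧ InKbi γ k₂ ∧
      p * ThetaBi β j * q = k₁ * (p * ThetaBi β N * q) * k₂ := by
  obtain ⟨Mp, hp⟩ := exists_inKbi_conj_diagBiSymm p α
  obtain ⟨Mq, hq⟩ := exists_inKbi_conj_diagBiSymm q⁻¹ γ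
  refine ⟨max β (max Mp Mq), fun j hj => ?_⟩
  obtain ⟨c, d, hc, hd, hθ⟩ :=
    exists_thetaPerm_eq_mul_mul (le_max_left β (max Mp Mq)) hj
  refine ⟨p * diagBiSymm c * p⁻¹, q⁻¹ * diagBiSymm d * q⁻¹⁻¹,
    hp c fun x hx => hc x (by omega), hq d fun x hx => hd x (by omega), ?_⟩
  rw [ThetaBi_eq_diagBiSymm, ThetaBi_eq_diagBiSymm, hθ, map_mul, map_mul]
  group
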